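/- arXiv:math/0601069 — 4 statements merged into one kernel-verified Lean document; each statement's English description precedes it below -/
import Mathlib

section
/- If X is a compact Hausdorff space and C(X) (continuous complex-valued functions) is generated as a unital C*-algebra by n positive elements b_1,...,b_n satisfying 0 ≤ b_1 + ... + b_n ≤ 1, then X is homeomorphic to a closed subset of the standard n-simplex Δⁿ ⊂ ℝ^{n+1}. -/
instance (priority := 100) ContinuousMap.instContinuousStar' {α β : Type*} [TopologicalSpace α]
    [TopologicalSpace β] [Star β] [ContinuousStar β] : ContinuousStar C(α, β) :=
  ⟨ContinuousMap.continuous_postcomp starContinuousMap⟩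

/-- The complexification of a real-valued continuous function. -/
noncomputable def ofRealCM {X : Type*} [TopologicalSpace X] (f : C(X, ℝ)) : C(X, ℂ) :=
  (⟨Complex.ofReal, Complex.continuous_ofReal⟩ : C(ℝ, ℂ)).comp f

/-!
The map `x ↦ (b₁ x, …, bₙ x, 1 - ∑ bᵢ x)` is a continuous map `X → Δⁿ`. It is injective: the
functions taking the same value at `x` and `y` form a closed star subalgebra of `C(X, ℂ)`, so if
it contains every `bᵢ` it is all of `C(X, ℂ)`, while continuous functions separate the points of
a compact Hausdorff space. A continuous injection of a compact space into a Hausdorff space is a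
closed embedding.
-/

@[simp]
theorem ofRealCM_apply {X : Type*} [TopologicalSpace X] (f : C(X, ℝ)) (x : X) :
    ofRealCM f x = f x :=
  rfl

theorem Fin.snoc_one_sub_sum_mem_stdSimplex {𝕜 : Type*} [Ring 𝕜] [PartialOrder 𝕜]
    [IsOrderedRing 𝕜] {n : ℕ} {v : Fin n → 𝕜} (h0 : ∀ i, 0 ≤ v i) (h1 : ∑ i, v i ≤ 1) :
    (Fin.snoc v (1 - ∑ i, v i) : Fin (n + 1) → 𝕜) ∈ stdSimplex 𝕜 (Fin (n + 1)) := by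
  refine ⟨fun j => ?_, by simp⟩
  induction j using Fin.lastCases with
  | last => simpa using h1
  | cast i => simpa using h0 i

namespace ContinuousMap

variable {X : Type*} [TopologicalSpace X]

theorem apply_eq_of_mem_topologicalClosure_adjoin [LocallyCompactSpace X] {R : Type*}
    [CommSemiring R] [TopologicalSpace R] [IsTopologicalSemiring R] [StarRing R]
    [ContinuousStar R] [T2Space R]
    {s : Set C(X, R)} {x y : X} (hs : ∀ g ∈ s, g x = g y) {f : C(X, R)}
    (hf : f ∈ (StarAlgebra.adjoin R s).topologicalClosure) : f x = f y := by
  let φ := evalStarAlgHom R R x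
  let ψ := evalStarAlgHom R R y
  have hclosed : IsClosed (StarAlgHom.equalizer φ ψ : Set C(X, R)) :=
    isClosed_eq (continuous_eval_const x) (continuous_eval_const y)
  exact StarSubalgebra.topologicalClosure_minimal (StarAlgHom.adjoin_le_equalizer φ ψ hs)
    hclosed hf

theorem eq_of_topologicalClosure_adjoin_eq_top [LocallyCompactSpace X] [T35Space X]
    {s : Set C(X, ℂ)} (hs : (StarAlgebra.adjoin ℂ s).topologicalClosure = ⊤) {x y : X}
    (hxy : ∀ g ∈ s, g x = g y) : x = y := by
  by_contra hne
  obtain ⟨f, hf, hfxy⟩ := separatesPoints_continuous_of_t35Space hne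
  have := apply_eq_of_mem_topologicalClosure_adjoin hxy (f := ofRealCM ⟨f, hf⟩) (hs ▸ trivial)
  exact hfxy (by simpa using this)

noncomputable def toStdSimplex {n : ℕ} (b : Fin n → C(X, ℝ)) (hpos : ∀ i, 0 ≤ b i)
    (hsum : ∑ i, b i ≤ 1) : C(X, stdSimplex ℝ (Fin (n + 1))) where
  toFun x := ⟨Fin.snoc (fun i => b i x) (1 - ∑ i, b i x),
    Fin.snoc_one_sub_sum_mem_stdSimplex (fun i => hpos i x) (by simpa using hsum x)⟩
  continuous_toFun := by fun_prop

theorem toStdSimplex_injective {n : ℕ} {b : Fin n → C(X, ℝ)} {hpos : ∀ i, 0 ≤ b i}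
    {hsum : ∑ i, b i ≤ 1} (hb : ∀ x y, (∀ i, b i x = b i y) → x = y) :
    Function.Injective (toStdSimplex b hpos hsum) := fun x y hxy =>
  hb x y fun i => by
    simpa [toStdSimplex] using congrFun (congrArg Subtype.val hxy) i.castSucc

end ContinuousMap

/-- If `C(X)` is generated as a unital C*-algebra by `n` positive elements `b₁, …, bₙ`
with `0 ≤ b₁ + ⋯ + bₙ ≤ 1`, then `X` is homeomorphic to a closed subset of the
standard `n`-simplex `Δⁿ ⊆ ℝ^{n+1}`. -/
theorem closedEmbedding_into_simplex_of_generators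
    (X : Type) [TopologicalSpace X] [CompactSpace X] [T2Space X] (n : ℕ)
    (b : Fin n → C(X, ℝ)) (hpos : ∀ i, 0 ≤ b i) (hsum : ∑ i, b i ≤ 1)
    (hgen : (StarAlgebra.adjoin ℂ (Set.range fun i => ofRealCM (b i))).topologicalClosure
      = (⊤ : StarSubalgebra ℂ C(X, ℂ))) :
    ∃ e : X → stdSimplex ℝ (Fin (n + 1)), Topology.IsClosedEmbedding e := by
  let e := ContinuousMap.toStdSimplex b hpos hsum
  refine ⟨e, e.continuous.isClosedEmbedding <| ContinuousMap.toStdSimplex_injective ?_⟩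
  refine fun x y hxy => ContinuousMap.eq_of_topologicalClosure_adjoin_eq_top hgen ?_
  rintro _ ⟨i, rfl⟩
  simp [hxy i]
end

section
/- C(Δⁿ) is the universal unital C*-algebra generated by n+1 pairwise commuting positive elements summing to the unit: for any unital C*-algebra B and positive pairwise commuting elements c_0,...,c_n ∈ B with c_0 + ... + c_n = 1, there is a unique unital *-homomorphism C(Δⁿ) → B sending the i-th coordinate function to c_i. -/
/-!
The `cᵢ` generate a commutative C⋆-subalgebra `S` of `B`, and Gelfand duality identifies `S`
with `C(Ŝ, ℂ)` for its character space `Ŝ`. A character `χ` sends `(c₀, …, cₙ)` to a point of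
`Δⁿ`, because `χ cᵢ` lies in the spectrum of `cᵢ` and `∑ χ cᵢ = χ 1 = 1`; precomposition with the
resulting continuous map `Ŝ → Δⁿ` gives the homomorphism `C(Δⁿ) → S ⊆ B`. Uniqueness is
Stone–Weierstrass: the coordinate functions separate the points of `Δⁿ`.
-/

/-- The `i`-th coordinate function on the standard simplex, as a complex-valued
continuous function. -/
noncomputable def simplexCoord (n : ℕ) (i : Fin (n + 1)) :
    C(stdSimplex ℝ (Fin (n + 1)), ℂ) :=
  ⟨fun p => (p.1 i : ℂ),
    Complex.continuous_ofReal.comp ((continuous_apply i).comp continuous_subtype_val)⟩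

open scoped CStarAlgebra
open WeakDual WeakDual.CharacterSpace

theorem ContinuousMap.starAlgHom_ext_of_separatesPoints {X 𝕜 A : Type*} [TopologicalSpace X]
    [CompactSpace X] [RCLike 𝕜] [Ring A] [StarRing A] [Algebra 𝕜 A] [TopologicalSpace A]
    [T2Space A] {φ ψ : C(X, 𝕜) →⋆ₐ[𝕜] A} (hφ : Continuous φ) (hψ : Continuous ψ)
    {s : Set C(X, 𝕜)} (hs : Set.SeparatesPoints ((fun f : C(X, 𝕜) => (f : X → 𝕜)) '' s))
    (h : Set.EqOn φ ψ s) : φ = ψ := by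
  have hsep : (StarAlgebra.adjoin 𝕜 s).SeparatesPoints := fun x y hxy => by
    obtain ⟨_, ⟨f, hf, rfl⟩, hfxy⟩ := hs hxy
    exact ⟨f, ⟨f, StarAlgebra.subset_adjoin 𝕜 s hf, rfl⟩, hfxy⟩
  suffices (⊤ : StarSubalgebra 𝕜 C(X, 𝕜)) ≤ StarAlgHom.equalizer φ ψ from
    StarAlgHom.ext fun f => this StarSubalgebra.mem_top
  rw [← starSubalgebra_topologicalClosure_eq_top_of_separatesPoints _ hsep]
  exact StarSubalgebra.topologicalClosure_minimal (StarAlgebra.adjoin_le h) (isClosed_eq hφ hψ)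

-- `simplexCoord n` is `stdSimplexCoord (Fin (n + 1))` by definition.
noncomputable def stdSimplexCoord (ι : Type*) [Fintype ι] (i : ι) : C(stdSimplex ℝ ι, ℂ) :=
  ⟨fun p => (p.1 i : ℂ),
    Complex.continuous_ofReal.comp ((continuous_apply i).comp continuous_subtype_val)⟩

theorem separatesPoints_range_stdSimplexCoord (ι : Type*) [Fintype ι] :
    Set.SeparatesPoints ((fun f : C(stdSimplex ℝ ι, ℂ) => (f : stdSimplex ℝ ι → ℂ)) ''
      Set.range (stdSimplexCoord ι)) := fun p q hpq => by
  obtain ⟨i, hi⟩ : ∃ i, p.1 i ≠ q.1 i := by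
    by_contra! h
    exact hpq (Subtype.ext (funext h))
  exact ⟨_, ⟨_, ⟨i, rfl⟩, rfl⟩, fun h => hi (Complex.ofReal_injective h)⟩

theorem starAlgHom_ext_stdSimplexCoord {ι B : Type*} [Fintype ι] [CStarAlgebra B]
    {φ ψ : C(stdSimplex ℝ ι, ℂ) →⋆ₐ[ℂ] B}
    (h : ∀ i, φ (stdSimplexCoord ι i) = ψ (stdSimplexCoord ι i)) : φ = ψ :=
  ContinuousMap.starAlgHom_ext_of_separatesPoints (map_continuous φ) (map_continuous ψ)
    (separatesPoints_range_stdSimplexCoord ι) (Set.forall_mem_range.2 h)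

noncomputable abbrev StarSubalgebra.commCStarAlgebraTopologicalClosure {A : Type*}
    [CStarAlgebra A] (s : StarSubalgebra ℂ A) (hs : ∀ x y : s, x * y = y * x) :
    CommCStarAlgebra s.topologicalClosure :=
  letI := s.commRingTopologicalClosure hs
  haveI : IsClosed (s.topologicalClosure : Set A) := s.isClosed_topologicalClosure
  { }

section CommCStarAlgebra

variable {ι A : Type*} [Fintype ι] [CommCStarAlgebra A] {a : ι → A}
  (hpos : ∀ i, spectrum ℂ (a i) ⊆ {z : ℂ | 0 ≤ z.re ∧ z.im = 0}) (hsum : ∑ i, a i = 1)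

noncomputable def characterSpaceToStdSimplex : C(characterSpace ℂ A, stdSimplex ℝ ι) where
  toFun χ := ⟨fun i => (χ (a i)).re, fun i => (hpos i (apply_mem_spectrum χ (a i))).1, by
    rw [← Complex.re_sum, ← map_sum, hsum, map_one, Complex.one_re]⟩
  continuous_toFun := by
    refine Continuous.subtype_mk (continuous_pi fun i => ?_) _
    exact Complex.continuous_re.comp ((eval_continuous (a i)).comp continuous_subtype_val)

theorem ofReal_characterSpaceToStdSimplex_apply (χ : characterSpace ℂ A) (i : ι) :
    ((characterSpaceToStdSimplex hpos hsum χ : ι → ℝ) i : ℂ) = χ (a i) :=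
  Complex.ext rfl (hpos i (apply_mem_spectrum χ (a i))).2.symm

noncomputable def stdSimplexLift : C(stdSimplex ℝ ι, ℂ) →⋆ₐ[ℂ] A :=
  ((gelfandStarTransform A).symm : C(characterSpace ℂ A, ℂ) →⋆ₐ[ℂ] A).comp
    (ContinuousMap.compStarAlgHom' ℂ ℂ (characterSpaceToStdSimplex hpos hsum))

theorem stdSimplexLift_stdSimplexCoord (i : ι) :
    stdSimplexLift hpos hsum (stdSimplexCoord ι i) = a i := by
  have : (stdSimplexCoord ι i).comp (characterSpaceToStdSimplex hpos hsum) =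
      gelfandStarTransform A (a i) :=
    ContinuousMap.ext (ofReal_characterSpaceToStdSimplex_apply hpos hsum · i)
  simp [stdSimplexLift, this]

end CommCStarAlgebra

open scoped IsMulCommutative in
theorem exists_starAlgHom_stdSimplexCoord_eq {ι B : Type*} [Fintype ι] [CStarAlgebra B]
    {c : ι → B} (hsa : ∀ i, IsSelfAdjoint (c i))
    (hpos : ∀ i, spectrum ℂ (c i) ⊆ {z : ℂ | 0 ≤ z.re ∧ z.im = 0})
    (hcomm : ∀ i j, Commute (c i) (c j)) (hsum : ∑ i, c i = 1) :
    ∃ φ : C(stdSimplex ℝ ι, ℂ) →⋆ₐ[ℂ] B, ∀ i, φ (stdSimplexCoord ι i) = c i := by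
  let s := StarAlgebra.adjoin ℂ (Set.range c)
  have : IsMulCommutative s := StarAlgebra.isMulCommutative_adjoin ℂ
    (by rintro _ ⟨i, rfl⟩ _ ⟨j, rfl⟩; exact hcomm i j)
    (by rintro _ ⟨i, rfl⟩ _ ⟨j, rfl⟩; rw [(hsa j).star_eq]; exact hcomm i j)
  let := s.commCStarAlgebraTopologicalClosure mul_comm
  let a : ι → s.topologicalClosure := fun i =>
    ⟨c i, s.le_topologicalClosure (StarAlgebra.subset_adjoin ℂ _ ⟨i, rfl⟩)⟩
  have hpos' : ∀ i, spectrum ℂ (a i) ⊆ {z : ℂ | 0 ≤ z.re ∧ z.im = 0} := fun i => by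
    rw [StarSubalgebra.spectrum_eq (hS := s.isClosed_topologicalClosure)]
    exact hpos i
  have hsum' : ∑ i, a i = 1 := Subtype.ext (by simpa [a] using hsum)
  exact ⟨s.topologicalClosure.subtype.comp (stdSimplexLift hpos' hsum'),
    fun i => congrArg Subtype.val (stdSimplexLift_stdSimplexCoord hpos' hsum' i)⟩

/-- `C(Δⁿ)` is the universal unital C*-algebra generated by `n+1` pairwise commuting
positive elements summing to the unit: given such elements `c₀, …, cₙ` in a unital
C*-algebra `B`, there is a unique unital *-homomorphism `C(Δⁿ) → B` sending the `i`-th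
coordinate function to `cᵢ`. -/
theorem simplex_universal_property (n : ℕ)
    (B : Type) [NormedRing B] [StarRing B] [CStarRing B] [NormedAlgebra ℂ B]
    [StarModule ℂ B] [CompleteSpace B]
    (c : Fin (n + 1) → B)
    (hsa : ∀ i, IsSelfAdjoint (c i))
    (hpos : ∀ i, spectrum ℂ (c i) ⊆ {z : ℂ | 0 ≤ z.re ∧ z.im = 0})
    (hcomm : ∀ i j, Commute (c i) (c j))
    (hsum : ∑ i, c i = 1) :
    ∃! φ : C(stdSimplex ℝ (Fin (n + 1)), ℂ) →⋆ₐ[ℂ] B,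
      ∀ i, φ (simplexCoord n i) = c i := by
  let : CStarAlgebra B := {}
  obtain ⟨φ, hφ⟩ := exists_starAlgHom_stdSimplexCoord_eq hsa hpos hcomm hsum
  exact ⟨φ, hφ, fun ψ hψ => starAlgHom_ext_stdSimplexCoord fun i => (hψ i).trans (hφ i).symm⟩
end

section
/- Let X be a normal topological space covered by countably many closed subsets X_i each of covering dimension at most n. Then X has covering dimension at most n (countable sum theorem). -/
/-- `CoveringDimLE X n` : the Lebesgue covering dimension of `X` is at most `n`,
i.e. every finite open cover admits an open refinement in which no point belongs
to more than `n + 1` sets. -/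
def CoveringDimLE (X : Type*) [TopologicalSpace X] (n : ℕ) : Prop :=
  ∀ U : Set (Set X), U.Finite → (∀ u ∈ U, IsOpen u) → ⋃₀ U = Set.univ →
    ∃ V : Set (Set X), (∀ v ∈ V, IsOpen v) ∧ ⋃₀ V = Set.univ ∧
      (∀ v ∈ V, ∃ u ∈ U, v ⊆ u) ∧
      ∀ x : X, {v | v ∈ V ∧ x ∈ v}.Finite ∧ {v | v ∈ V ∧ x ∈ v}.ncard ≤ n + 1

open Set

/-- Indexed form of `CoveringDimLE`: every finite indexed open cover has an open
shrinking (same index set) of pointwise order at most `n+1`. -/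
lemma covdim_indexed {X : Type*} [TopologicalSpace X] {n k : ℕ} (h : CoveringDimLE X n)
    (A : Fin k → Set X) (hA : ∀ s, IsOpen (A s)) (hAc : ⋃ s, A s = Set.univ) :
    ∃ B : Fin k → Set X, (∀ s, IsOpen (B s)) ∧ (⋃ s, B s = Set.univ) ∧
      (∀ s, B s ⊆ A s) ∧ ∀ x : X, {s | x ∈ B s}.ncard ≤ n + 1 := by
  rcases isEmpty_or_nonempty X with hX | hX
  · exact ⟨A, hA, hAc, fun s => subset_rfl, fun x => (hX.false x).elim⟩
  have hk : Nonempty (Fin k) := by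
    obtain ⟨x⟩ := hX
    have : x ∈ ⋃ s, A s := hAc ▸ mem_univ x
    rcases mem_iUnion.mp this with ⟨s, _⟩
    exact ⟨s⟩
  obtain ⟨V, hVo, hVc, hVref, hVord⟩ := h (Set.range A) (finite_range A)
    (by rintro u ⟨s, rfl⟩; exact hA s) (by rw [sUnion_range]; exact hAc)
  have hch : ∀ v : Set X, ∃ s : Fin k, v ∈ V → v ⊆ A s := by
    intro v
    by_cases hv : v ∈ V
    · obtain ⟨u, ⟨s, rfl⟩, hsub⟩ := hVref v hv
      exact ⟨s, fun _ => hsub⟩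
    · exact ⟨hk.some, fun h => absurd h hv⟩
  choose g hg using hch
  refine ⟨fun s => ⋃₀ {v | v ∈ V ∧ g v = s}, ?_, ?_, ?_, ?_⟩
  · intro s; exact isOpen_sUnion fun v hv => hVo v hv.1
  · apply eq_univ_of_forall; intro x
    have : x ∈ ⋃₀ V := hVc ▸ mem_univ x
    rcases this with ⟨v, hv, hxv⟩
    exact mem_iUnion.mpr ⟨g v, ⟨v, ⟨hv, rfl⟩, hxv⟩⟩
  · rintro s x ⟨v, ⟨hv, rfl⟩, hxv⟩
    exact hg v hv hxv
  · intro x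
    have hfin := (hVord x).1
    have hsub : {s : Fin k | x ∈ ⋃₀ {v | v ∈ V ∧ g v = s}} ⊆ g '' {v | v ∈ V ∧ x ∈ v} := by
      rintro s ⟨v, ⟨hv, rfl⟩, hxv⟩
      exact ⟨v, ⟨hv, hxv⟩, rfl⟩
    calc {s : Fin k | x ∈ ⋃₀ {v | v ∈ V ∧ g v = s}}.ncard
        ≤ (g '' {v | v ∈ V ∧ x ∈ v}).ncard := ncard_le_ncard hsub (hfin.image g)
      _ ≤ {v | v ∈ V ∧ x ∈ v}.ncard := ncard_image_le hfin
      _ ≤ n + 1 := (hVord x).2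

/-- Swelling lemma: in a normal space, a finite family of closed sets can be enlarged
to open sets (within prescribed open supersets) without creating new intersections. -/
lemma swelling {X : Type*} [TopologicalSpace X] [NormalSpace X] {k : ℕ}
    {C D : Fin k → Set X} (hC : ∀ s, IsClosed (C s)) (hD : ∀ s, IsOpen (D s))
    (hCD : ∀ s, C s ⊆ D s) :
    ∃ W : Fin k → Set X, (∀ s, IsOpen (W s)) ∧ (∀ s, C s ⊆ W s) ∧ (∀ s, W s ⊆ D s) ∧
      ∀ T : Finset (Fin k), (⋂ s ∈ T, W s).Nonempty → (⋂ s ∈ T, C s).Nonempty := by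
  suffices h : ∀ m : ℕ, ∃ W : Fin k → Set X,
      (∀ s, C s ⊆ W s) ∧ (∀ s, closure (W s) ⊆ D s) ∧
      (∀ s : Fin k, (s : ℕ) < m → IsOpen (W s)) ∧ (∀ s : Fin k, m ≤ (s : ℕ) → W s = C s) ∧
      (∀ T : Finset (Fin k), (⋂ s ∈ T, closure (W s)).Nonempty → (⋂ s ∈ T, C s).Nonempty) by
    obtain ⟨W, h1, h2, h3, _, h5⟩ := h k
    exact ⟨W, fun s => h3 s s.isLt, h1, fun s => subset_closure.trans (h2 s),
      fun T hT => h5 T (hT.mono (iInter₂_mono fun s _ => subset_closure))⟩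
  intro m
  induction m with
  | zero =>
    refine ⟨C, fun s => subset_rfl, fun s => by rw [(hC s).closure_eq]; exact hCD s,
      fun s hs => absurd hs (Nat.not_lt_zero _), fun s _ => rfl, fun T hT => ?_⟩
    exact hT.mono (iInter₂_mono fun s _ => by rw [(hC s).closure_eq])
  | succ m ih =>
    obtain ⟨W, h1, h2, h3, h4, h5⟩ := ih
    by_cases hm : m < k
    · set m' : Fin k := ⟨m, hm⟩ with hm'
      set E : Set X := ⋃ T ∈ {T : Finset (Fin k) | (⋂ s ∈ T, closure (W s)) ∩ C m' = ∅},
          ⋂ s ∈ T, closure (W s) with hE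
      have hEclosed : IsClosed E := by
        apply Set.Finite.isClosed_biUnion (Set.toFinite _)
        intro T _
        exact isClosed_biInter fun s _ => isClosed_closure
      have hCnE : ∀ x ∈ C m', x ∉ E := by
        intro x hx hxE
        rcases mem_iUnion₂.mp hxE with ⟨T, hT, hxT⟩
        exact absurd (Set.eq_empty_iff_forall_notMem.mp hT x ⟨hxT, hx⟩) (fun h => h)
      obtain ⟨O, hOopen, hCO, hclO⟩ := normal_exists_closure_subset (hC m')
        ((hD m').inter hEclosed.isOpen_compl)
        (fun x hx => ⟨hCD m' hx, hCnE x hx⟩)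
      refine ⟨Function.update W m' O, ?_, ?_, ?_, ?_, ?_⟩
      · intro s
        by_cases hs : s = m'
        · subst hs; rw [Function.update_self]; exact hCO
        · rw [Function.update_of_ne hs]; exact h1 s
      · intro s
        by_cases hs : s = m'
        · subst hs; rw [Function.update_self]
          exact hclO.trans (inter_subset_left)
        · rw [Function.update_of_ne hs]; exact h2 s
      · intro s hs
        by_cases hsm : s = m'
        · subst hsm; rw [Function.update_self]; exact hOopen
        · rw [Function.update_of_ne hsm]
          refine h3 s ?_
          rcases Nat.lt_succ_iff_lt_or_eq.mp hs with h | h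
          · exact h
          · exact absurd (Fin.ext h) hsm
      · intro s hs
        have hsm : s ≠ m' := by
          intro h; subst h; simp only [hm'] at hs; omega
        rw [Function.update_of_ne hsm]
        exact h4 s (by omega)
      · intro T hT
        by_cases hmT : m' ∈ T
        · obtain ⟨x, hx⟩ := hT
          have hxO : x ∈ closure O := by
            have := mem_iInter₂.mp hx m' hmT
            rwa [Function.update_self] at this
          have hxrest : x ∈ ⋂ s ∈ T.erase m', closure (W s) := by
            refine mem_iInter₂.mpr fun s hs => ?_
            have := mem_iInter₂.mp hx s (Finset.mem_of_mem_erase hs)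
            rwa [Function.update_of_ne (Finset.ne_of_mem_erase hs)] at this
          have hne : ((⋂ s ∈ T.erase m', closure (W s)) ∩ C m').Nonempty := by
            rw [Set.nonempty_iff_ne_empty]
            intro hcon
            have hxE : x ∈ E := mem_iUnion₂.mpr ⟨T.erase m', hcon, hxrest⟩
            exact (hclO hxO).2 hxE
          obtain ⟨y, hy1, hy2⟩ := hne
          apply h5 T
          refine ⟨y, mem_iInter₂.mpr fun s hs => ?_⟩
          by_cases hsm : s = m'
          · rw [hsm]; exact subset_closure (h1 m' hy2)
          · exact mem_iInter₂.mp hy1 s (Finset.mem_erase.mpr ⟨hsm, hs⟩)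
        · apply h5 T
          have heq : (⋂ s ∈ T, closure (Function.update W m' O s)) = ⋂ s ∈ T, closure (W s) :=
            iInter₂_congr fun s hs => by
              rw [Function.update_of_ne (fun h => hmT (by rw [← h]; exact hs))]
          rwa [heq] at hT
    · refine ⟨W, h1, h2, fun s hs => h3 s (lt_of_lt_of_le s.isLt (Nat.le_of_not_lt hm)),
        fun s hs => h4 s (le_trans (Nat.le_succ m) hs), h5⟩

/-- One step of the countable sum construction: given an open cover, produce a shrinking
(with closures inside the old sets) whose order on the closed set `Fi` is at most `n+1`. -/
lemma covdim_step {X : Type} [TopologicalSpace X] [NormalSpace X] {n k : ℕ}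
    {Fi : Set X} (hFc : IsClosed Fi) (hFd : CoveringDimLE Fi n)
    (v : Fin k → Set X) (hvo : ∀ s, IsOpen (v s)) (hvc : ⋃ s, v s = Set.univ) :
    ∃ w : Fin k → Set X, (∀ s, IsOpen (w s)) ∧ (⋃ s, w s = Set.univ) ∧
      (∀ s, closure (w s) ⊆ v s) ∧ ∀ x ∈ Fi, {s | x ∈ w s}.ncard ≤ n + 1 := by
  set A : Fin k → Set Fi := fun s => Subtype.val ⁻¹' (v s) with hA
  have hAo : ∀ s, IsOpen (A s) := fun s => (hvo s).preimage continuous_subtype_val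
  have hAc : ⋃ s, A s = Set.univ := by
    rw [hA]
    rw [← preimage_iUnion, hvc, preimage_univ]
  obtain ⟨B, hBo, hBc, hBsub, hBord⟩ := covdim_indexed hFd A hAo hAc
  have hex : ∀ s, ∃ O : Set X, IsOpen O ∧ Subtype.val ⁻¹' O = B s := by
    intro s
    obtain ⟨O, hO1, hO2⟩ := isOpen_induced_iff.mp (hBo s)
    exact ⟨O, hO1, hO2⟩
  choose O hOopen hOB using hex
  set w' : Fin k → Set X := fun s => (v s \ Fi) ∪ (O s ∩ v s) with hw'
  have hw'o : ∀ s, IsOpen (w' s) := fun s =>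
    ((hvo s).sdiff hFc).union ((hOopen s).inter (hvo s))
  have hw'sub : ∀ s, w' s ⊆ v s := by
    intro s x hx
    rcases hx with h | h
    · exact h.1
    · exact h.2
  have hmemF : ∀ (x : X) (hx : x ∈ Fi) (s : Fin k), x ∈ w' s ↔ (⟨x, hx⟩ : Fi) ∈ B s := by
    intro x hx s
    constructor
    · rintro (⟨_, hxn⟩ | ⟨h1, _⟩)
      · exact absurd hx hxn
      · rw [← hOB s]; exact h1
    · intro hB
      right
      have hxO : x ∈ O s := by rw [← hOB s] at hB; exact hB
      exact ⟨hxO, hBsub s hB⟩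
  have hw'c : ⋃ s, w' s = Set.univ := by
    apply eq_univ_of_forall; intro x
    by_cases hx : x ∈ Fi
    · have : (⟨x, hx⟩ : Fi) ∈ ⋃ s, B s := hBc ▸ mem_univ _
      rcases mem_iUnion.mp this with ⟨s, hs⟩
      exact mem_iUnion.mpr ⟨s, (hmemF x hx s).mpr hs⟩
    · have : x ∈ ⋃ s, v s := hvc ▸ mem_univ _
      rcases mem_iUnion.mp this with ⟨s, hs⟩
      exact mem_iUnion.mpr ⟨s, Or.inl ⟨hs, hx⟩⟩
  obtain ⟨w, hwc, hwo, hwcl⟩ :=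
    exists_iUnion_eq_closure_subset hw'o (fun x => Set.toFinite _) hw'c
  refine ⟨w, hwo, hwc, fun s => (hwcl s).trans (hw'sub s), ?_⟩
  intro x hx
  have hsub : {s | x ∈ w s} ⊆ {s | (⟨x, hx⟩ : Fi) ∈ B s} := by
    intro s hs
    exact (hmemF x hx s).mp ((hwcl s) (subset_closure hs))
  exact le_trans (ncard_le_ncard hsub (Set.toFinite _)) (hBord _)

/-- Countable sum theorem: a normal space covered by countably many closed subsets of
covering dimension at most `n` has covering dimension at most `n`. -/
theorem covdim_countable_sum
    (X : Type) [TopologicalSpace X] [NormalSpace X] (n : ℕ)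
    (F : ℕ → Set X) (hclosed : ∀ i, IsClosed (F i)) (hcover : ⋃ i, F i = Set.univ)
    (hdim : ∀ i, CoveringDimLE (F i) n) :
    CoveringDimLE X n := by
  intro U hUfin hUopen hUcov
  rcases isEmpty_or_nonempty X with hX | hX
  · refine ⟨∅, fun v hv => hv.elim, ?_, fun v hv => hv.elim, fun x => (hX.false x).elim⟩
    rw [sUnion_empty, Set.univ_eq_empty_iff.mpr hX]
  classical
  -- enumerate the cover
  obtain ⟨k, u, hu⟩ : ∃ (k : ℕ) (u : Fin k → Set X), Set.range u = U := by
    refine ⟨hUfin.toFinset.card, fun s => (hUfin.toFinset.equivFin.symm s : Set X), ?_⟩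
    ext v
    simp only [mem_range]
    constructor
    · rintro ⟨s, rfl⟩
      exact hUfin.mem_toFinset.mp (hUfin.toFinset.equivFin.symm s).2
    · intro hv
      exact ⟨hUfin.toFinset.equivFin ⟨v, hUfin.mem_toFinset.mpr hv⟩, by simp⟩
  have huo : ∀ s, IsOpen (u s) := fun s => hUopen _ (hu ▸ mem_range_self s)
  have huc : ⋃ s, u s = Set.univ := by rw [← sUnion_range, hu]; exact hUcov
  -- step function
  have hstep : ∀ (i : ℕ) (v : Fin k → Set X), ∃ w : Fin k → Set X,
      ((∀ s, IsOpen (v s)) ∧ ⋃ s, v s = Set.univ) →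
      (∀ s, IsOpen (w s)) ∧ (⋃ s, w s = Set.univ) ∧ (∀ s, closure (w s) ⊆ v s) ∧
        ∀ x ∈ F i, {s | x ∈ w s}.ncard ≤ n + 1 := by
    intro i v
    by_cases hv : (∀ s, IsOpen (v s)) ∧ ⋃ s, v s = Set.univ
    · obtain ⟨w, hw⟩ := covdim_step (hclosed i) (hdim i) v hv.1 hv.2
      exact ⟨w, fun _ => hw⟩
    · exact ⟨v, fun h => absurd h hv⟩
  choose g hg using hstep
  set V : ℕ → Fin k → Set X := fun i => Nat.rec u (fun i v => g i v) i with hVdef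
  have hVsucc : ∀ i, V (i + 1) = g i (V i) := fun i => rfl
  have hP : ∀ i, (∀ s, IsOpen (V i s)) ∧ ⋃ s, V i s = Set.univ := by
    intro i
    induction i with
    | zero => exact ⟨huo, huc⟩
    | succ i ih =>
      have h := hg i (V i) ih
      rw [← hVsucc i] at h
      exact ⟨h.1, h.2.1⟩
  have hVcl : ∀ i s, closure (V (i + 1) s) ⊆ V i s := by
    intro i s
    have h := hg i (V i) (hP i)
    rw [← hVsucc i] at h
    exact h.2.2.1 s
  have hVord : ∀ i, ∀ x ∈ F i, {s | x ∈ V (i + 1) s}.ncard ≤ n + 1 := by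
    intro i
    have h := hg i (V i) (hP i)
    rw [← hVsucc i] at h
    exact h.2.2.2
  have hVmono : ∀ i j, i ≤ j → ∀ s, V j s ⊆ V i s := by
    intro i j hij
    induction j, hij using Nat.le_induction with
    | base => exact fun s => subset_rfl
    | succ j hj ih =>
      exact fun s => (subset_closure.trans (hVcl j s)).trans (ih s)
  set C : Fin k → Set X := fun s => ⋂ i, V i s with hC
  have hCcl : ∀ s, IsClosed (C s) := by
    intro s
    have heq : C s = ⋂ i, closure (V (i + 1) s) := by
      apply Subset.antisymm
      · intro x hx
        exact mem_iInter.mpr fun i => subset_closure (mem_iInter.mp hx (i + 1))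
      · intro x hx
        exact mem_iInter.mpr fun i => hVcl i s (mem_iInter.mp hx i)
    rw [heq]
    exact isClosed_iInter fun i => isClosed_closure
  have hCcov : ∀ x : X, ∃ s, x ∈ C s := by
    intro x
    have hne : ∀ i, ∃ s, x ∈ V i s := fun i => mem_iUnion.mp ((hP i).2 ▸ mem_univ x)
    choose f hf using hne
    obtain ⟨s, hs⟩ := Finite.exists_infinite_fiber f
    refine ⟨s, mem_iInter.mpr fun i => ?_⟩
    have hinf : (f ⁻¹' {s} : Set ℕ).Infinite := Set.infinite_coe_iff.mp hs
    obtain ⟨j, hj1, hj2⟩ := hinf.exists_gt i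
    rw [Set.mem_preimage, Set.mem_singleton_iff] at hj1
    exact hVmono i j (le_of_lt hj2) s (hj1 ▸ hf j)
  have hCord : ∀ x : X, {s | x ∈ C s}.ncard ≤ n + 1 := by
    intro x
    have hxF : x ∈ ⋃ i, F i := hcover ▸ mem_univ x
    rcases mem_iUnion.mp hxF with ⟨j, hj⟩
    refine le_trans (ncard_le_ncard ?_ (Set.toFinite _)) (hVord j x hj)
    intro s hs
    exact mem_iInter.mp hs (j + 1)
  have hCu : ∀ s, C s ⊆ u s := fun s x hx => mem_iInter.mp hx 0
  obtain ⟨W, hWo, hCW, hWu, hWpat⟩ := swelling hCcl huo hCu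
  refine ⟨Set.range W, ?_, ?_, ?_, ?_⟩
  · rintro v ⟨s, rfl⟩; exact hWo s
  · apply Subset.antisymm (subset_univ _)
    intro x _
    obtain ⟨s, hs⟩ := hCcov x
    exact ⟨W s, ⟨s, rfl⟩, hCW s hs⟩
  · rintro v ⟨s, rfl⟩
    exact ⟨u s, hu ▸ mem_range_self s, hWu s⟩
  · intro x
    have heq : {v | v ∈ Set.range W ∧ x ∈ v} = W '' {s | x ∈ W s} := by
      ext v
      constructor
      · rintro ⟨⟨s, rfl⟩, hxv⟩; exact ⟨s, hxv, rfl⟩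
      · rintro ⟨s, hs, rfl⟩; exact ⟨⟨s, rfl⟩, hs⟩
    have hord : {s | x ∈ W s}.ncard ≤ n + 1 := by
      set T := (Set.toFinite {s | x ∈ W s}).toFinset with hT
      have hxT : x ∈ ⋂ s ∈ T, W s := by
        refine mem_iInter₂.mpr fun s hs => ?_
        rw [hT, Set.Finite.mem_toFinset] at hs
        exact hs
      obtain ⟨y, hy⟩ := hWpat T ⟨x, hxT⟩
      have hsub : {s | x ∈ W s} ⊆ {s | y ∈ C s} := by
        intro s hs
        refine mem_iInter₂.mp hy s ?_
        rw [hT, Set.Finite.mem_toFinset]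
        exact hs
      exact le_trans (ncard_le_ncard hsub (Set.toFinite _)) (hCord y)
    constructor
    · rw [heq]; exact (Set.toFinite _).image W
    · rw [heq]
      exact le_trans (ncard_image_le (Set.toFinite _)) hord
end

section
/- Let A be a C*-algebra and Y ⊆ Prim_k A a subset that is closed in Prim A. Then every irreducible representation of the quotient A_Y = A/J_Y is k-dimensional, i.e., A_Y is k-homogeneous. -/
variable (A : Type) [NonUnitalNormedRing A] [StarRing A] [CStarRing A] [NormedSpace ℂ A]
  [IsScalarTower ℂ A A] [SMulCommClass ℂ A A] [StarModule ℂ A] [CompleteSpace A]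

/-- A bundled irreducible *-representation of `A` on a complex Hilbert space. -/
structure IrredRep where
  H : Type
  [iN : NormedAddCommGroup H]
  [iP : InnerProductSpace ℂ H]
  [iC : CompleteSpace H]
  π : A →⋆ₙₐ[ℂ] (H →L[ℂ] H)
  nonzero : ∃ a, π a ≠ 0
  irred : ∀ K : Submodule ℂ H, IsClosed (K : Set H) →
    (∀ a : A, ∀ x ∈ K, π a x ∈ K) → K = ⊥ ∨ K = ⊤

attribute [instance] IrredRep.iN IrredRep.iP IrredRep.iC

/-- `P` is a primitive ideal of `A`. -/
def IsPrimIdeal (P : Set A) : Prop :=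
  ∃ ρ : IrredRep A, P = {a | ρ.π a = 0}

/-- `P` is the kernel of a `k`-dimensional irreducible representation of `A`,
i.e. `P ∈ Prim_k A`. -/
def IsPrimkIdeal (k : ℕ) (P : Set A) : Prop :=
  ∃ ρ : IrredRep A, FiniteDimensional ℂ ρ.H ∧ Module.finrank ℂ ρ.H = k ∧
    P = {a | ρ.π a = 0}

/-- A subset of the primitive ideal space which is closed in the Jacobson
(hull-kernel) topology. -/
def IsJacobsonClosed (S : Set (Set A)) : Prop :=
  (∀ P ∈ S, IsPrimIdeal A P) ∧
    ∀ P : Set A, IsPrimIdeal A P → (⋂₀ S) ⊆ P → P ∈ S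

set_option linter.unusedSectionVars false
set_option maxHeartbeats 1000000

namespace HomogAux
variable {A}

lemma nontriv (σ : IrredRep A) : Nontrivial σ.H := by
  by_contra h
  rw [not_nontrivial_iff_subsingleton] at h
  obtain ⟨a, ha⟩ := σ.nonzero
  exact ha (ContinuousLinearMap.ext fun x => Subsingleton.elim _ _)

lemma nondeg (σ : IrredRep A) {x : σ.H} (hx : ∀ a, σ.π a x = 0) : x = 0 := by
  set N : Submodule ℂ σ.H := ⨅ a : A, LinearMap.ker (σ.π a : σ.H →ₗ[ℂ] σ.H) with hN
  have hmem : ∀ y : σ.H, y ∈ N ↔ ∀ a, σ.π a y = 0 := by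
    intro y
    simp [hN, Submodule.mem_iInf, LinearMap.mem_ker]
  have hclosed : IsClosed (N : Set σ.H) := by
    have : (N : Set σ.H) = ⋂ a : A, (LinearMap.ker (σ.π a : σ.H →ₗ[ℂ] σ.H) : Set σ.H) := by
      simp [hN, Submodule.coe_iInf]
    rw [this]
    exact isClosed_iInter fun a => ContinuousLinearMap.isClosed_ker (σ.π a)
  have hinv : ∀ a : A, ∀ y ∈ N, σ.π a y ∈ N := by
    intro a y hy
    rw [hmem] at hy ⊢
    intro b
    have h1 : σ.π b (σ.π a y) = σ.π (b * a) y := by rw [map_mul]; rfl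
    rw [h1, hy (b * a)]
  rcases σ.irred N hclosed hinv with h | h
  · have : x ∈ N := (hmem x).2 hx
    rw [h] at this
    simpa using this
  · exfalso
    obtain ⟨a, ha⟩ := σ.nonzero
    refine ha (ContinuousLinearMap.ext fun y => ?_)
    have : y ∈ N := h ▸ Submodule.mem_top
    simpa using (hmem y).1 this a

lemma schur (σ : IrredRep A) [FiniteDimensional ℂ σ.H] (f : σ.H →ₗ[ℂ] σ.H)
    (hf : ∀ (a : A) (x : σ.H), f (σ.π a x) = σ.π a (f x)) : ∃ c : ℂ, ∀ x, f x = c • x := by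
  haveI := nontriv σ
  obtain ⟨c, hc⟩ := Module.End.exists_eigenvalue (f : Module.End ℂ σ.H)
  refine ⟨c, ?_⟩
  have hclosed := Submodule.closed_of_finiteDimensional (Module.End.eigenspace (f : Module.End ℂ σ.H) c)
  have hinv : ∀ a : A, ∀ x ∈ Module.End.eigenspace (f : Module.End ℂ σ.H) c, σ.π a x ∈ Module.End.eigenspace (f : Module.End ℂ σ.H) c := by
    intro a x hx
    rw [Module.End.mem_eigenspace_iff] at hx ⊢
    rw [hf, hx, map_smul]
  rcases σ.irred _ hclosed hinv with h | h
  · exact absurd h hc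
  · intro x
    have : x ∈ Module.End.eigenspace (f : Module.End ℂ σ.H) c := h ▸ Submodule.mem_top
    exact Module.End.mem_eigenspace_iff.1 this


open scoped InnerProductSpace in
lemma surj (σ : IrredRep A) [FiniteDimensional ℂ σ.H] : Function.Surjective σ.π := by
  classical
  set n := Module.finrank ℂ σ.H with hn
  set e : Module.Basis (Fin n) ℂ σ.H := Module.finBasis ℂ σ.H with he
  let V : Type := PiLp 2 (fun _ : Fin n => σ.H)
  let ψ : A →ₗ[ℂ] V :=
    { toFun := fun a => WithLp.toLp 2 (fun i => σ.π a (e i) : ∀ _ : Fin n, σ.H)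
      map_add' := by
        intro a b; apply PiLp.ext; intro i
        rw [PiLp.add_apply]; simp [map_add]
      map_smul' := by
        intro c a; apply PiLp.ext; intro i
        rw [PiLp.smul_apply]; simp [map_smul] }
  have hψ : ∀ (a : A) (i : Fin n), ψ a i = σ.π a (e i) := fun a i => rfl
  set M : Submodule ℂ V := LinearMap.range ψ with hM
  haveI : FiniteDimensional ℂ V := by
    exact Module.Finite.equiv (WithLp.linearEquiv 2 ℂ (∀ _ : Fin n, σ.H)).symm
  let Pr : V → V := fun w => (M.orthogonalProjectionOnto w : V)
  let D : A → V → V := fun a w => WithLp.toLp 2 (fun i => σ.π a (w i) : ∀ _ : Fin n, σ.H)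
  have hD : ∀ (a : A) (w : V) (i : Fin n), D a w i = σ.π a (w i) := fun a w i => rfl
  have hψmul : ∀ a b : A, ψ (a * b) = D a (ψ b) := by
    intro a b; apply PiLp.ext; intro i
    rw [hD, hψ, hψ, map_mul]; rfl
  have hDM : ∀ a : A, ∀ w ∈ M, D a w ∈ M := by
    rintro a w ⟨b, rfl⟩; exact ⟨a * b, (hψmul a b)⟩
  have hDadj : ∀ (a : A) (u w : V), ⟪u, D a w⟫_ℂ = ⟪D (star a) u, w⟫_ℂ := by
    intro a u w
    rw [PiLp.inner_apply, PiLp.inner_apply]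
    refine Finset.sum_congr rfl fun i _ => ?_
    rw [hD, hD]
    have hadj : σ.π (star a) = ContinuousLinearMap.adjoint (σ.π a) := by
      rw [← ContinuousLinearMap.star_eq_adjoint, ← map_star]
    rw [hadj, ContinuousLinearMap.adjoint_inner_left]
  have hDperp : ∀ a : A, ∀ w ∈ Mᗮ, D a w ∈ Mᗮ := by
    intro a w hw
    rw [Submodule.mem_orthogonal] at hw ⊢
    intro u hu
    rw [hDadj]
    exact hw _ (hDM (star a) u hu)
  have hPrM : ∀ w : V, Pr w ∈ M := fun w => (M.orthogonalProjectionOnto w).2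
  have hPrfix : ∀ w ∈ M, Pr w = w := fun w hw =>
    Submodule.starProjection_eq_self_iff (K := M) (v := w) |>.2 hw
  have hPrComm : ∀ (a : A) (w : V), Pr (D a w) = D a (Pr w) := by
    intro a w
    have h1 : Pr w ∈ M := hPrM w
    have h2 : w - Pr w ∈ Mᗮ := Submodule.sub_starProjection_mem_orthogonal w
    have hdecomp : D a w = D a (Pr w) + D a (w - Pr w) := by
      apply PiLp.ext; intro i
      rw [PiLp.add_apply, hD, hD, hD, PiLp.sub_apply, map_sub]
      abel
    have hz : Pr (D a (w - Pr w)) = 0 := by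
      have := Submodule.orthogonalProjectionOnto_apply_of_mem_orthogonal
        (hDperp a _ h2)
      simpa [Pr] using congrArg Subtype.val this
    calc Pr (D a w) = Pr (D a (Pr w)) + Pr (D a (w - Pr w)) := by
          simp only [Pr, hdecomp, map_add, Submodule.coe_add]
      _ = D a (Pr w) + 0 := by rw [hPrfix _ (hDM a _ h1), hz]
      _ = D a (Pr w) := add_zero _
  -- matrix entries of Pr are scalars
  have hsingle : ∀ (j : Fin n) (x : σ.H) (a : A),
      (WithLp.toLp 2 (Pi.single j (σ.π a x) : ∀ _ : Fin n, σ.H) : V) = D a (WithLp.toLp 2 (Pi.single j x)) := by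
    intro j x a
    apply PiLp.ext; intro i
    rw [hD]
    rcases eq_or_ne i j with rfl | hij
    · simp [Pi.single_eq_same]
    · simp [Pi.single_eq_of_ne hij]
  have hQ : ∀ i j : Fin n, ∃ c : ℂ, ∀ x : σ.H,
      Pr (WithLp.toLp 2 (Pi.single j x : ∀ _ : Fin n, σ.H) : V) i = c • x := by
    intro i j
    let f : σ.H →ₗ[ℂ] σ.H :=
      (PiLp.projₗ (𝕜 := ℂ) 2 (fun _ : Fin n => σ.H) i) ∘ₗ M.subtype ∘ₗ
        (M.orthogonalProjectionOnto).toLinearMap ∘ₗ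
        (WithLp.linearEquiv 2 ℂ (∀ _ : Fin n, σ.H)).symm.toLinearMap ∘ₗ
        (LinearMap.single ℂ (fun _ : Fin n => σ.H) j)
    have hf0 : ∀ x : σ.H, f x = Pr (WithLp.toLp 2 (Pi.single j x : ∀ _ : Fin n, σ.H) : V) i :=
      fun x => rfl
    have hcomm : ∀ (a : A) (x : σ.H), f (σ.π a x) = σ.π a (f x) := by
      intro a x
      rw [hf0, hf0, hsingle, hPrComm]
    obtain ⟨c, hc⟩ := schur σ f hcomm
    exact ⟨c, fun x => by rw [← hf0, hc]⟩
  choose c hc using hQ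
  -- the sum formula for Pr
  have hdecompw : ∀ w : V, w = ∑ j, (WithLp.toLp 2 (Pi.single j (w j) : ∀ _ : Fin n, σ.H) : V) := by
    intro w
    apply PiLp.ext; intro i
    have := map_sum (PiLp.projₗ (𝕜 := ℂ) 2 (fun _ : Fin n => σ.H) i)
      (fun j => (WithLp.toLp 2 (Pi.single j (w j) : ∀ _ : Fin n, σ.H) : V)) Finset.univ
    have h2 : (∑ j, (WithLp.toLp 2 (Pi.single j (w j) : ∀ _ : Fin n, σ.H) : V)) i
        = ∑ j, (Pi.single j (w j) : ∀ _ : Fin n, σ.H) i := this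
    rw [h2]
    simp [Pi.single_apply]
  have hPrsum : ∀ (w : V) (i : Fin n), Pr w i = ∑ j, c i j • w j := by
    intro w i
    conv_lhs => rw [hdecompw w]
    have h1 : Pr (∑ j, (WithLp.toLp 2 (Pi.single j (w j) : ∀ _ : Fin n, σ.H) : V))
        = ∑ j, Pr (WithLp.toLp 2 (Pi.single j (w j) : ∀ _ : Fin n, σ.H) : V) := by
      simp only [Pr, map_sum, Submodule.coe_sum]
    rw [h1]
    have h2 := map_sum (PiLp.projₗ (𝕜 := ℂ) 2 (fun _ : Fin n => σ.H) i)
      (fun j => Pr (WithLp.toLp 2 (Pi.single j (w j) : ∀ _ : Fin n, σ.H) : V)) Finset.univ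
    have h3 : (∑ j, Pr (WithLp.toLp 2 (Pi.single j (w j) : ∀ _ : Fin n, σ.H) : V)) i
        = ∑ j, Pr (WithLp.toLp 2 (Pi.single j (w j) : ∀ _ : Fin n, σ.H) : V) i := h2
    rw [h3]
    exact Finset.sum_congr rfl fun j _ => hc i j (w j)
  -- entries are delta
  have hdelta : ∀ i j : Fin n, c i j = if i = j then 1 else 0 := by
    intro i j
    have hfix : ∀ b : A, Pr (ψ b) = ψ b := fun b => hPrfix _ ⟨b, rfl⟩
    have h2 : (∑ j', c i j' • e j') = e i := by
      have hz : ∀ b : A, σ.π b ((∑ j', c i j' • e j') - e i) = 0 := by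
        intro b
        have h4 : Pr (ψ b) i = ψ b i := by rw [hfix]
        rw [hPrsum] at h4
        have h5 : σ.π b (∑ j', c i j' • e j') = ∑ j', c i j' • σ.π b (e j') := by
          rw [map_sum]
          exact Finset.sum_congr rfl fun j' _ => (σ.π b).map_smul _ _
        rw [map_sub, h5]
        simp only [hψ] at h4
        rw [h4, sub_self]
      have := nondeg σ hz
      rwa [sub_eq_zero] at this
    have h7 : (e.repr (∑ j', c i j' • e j') : Fin n → ℂ) = c i := e.repr_sum_self _
    rw [h2] at h7
    rw [← congrFun h7 j, Module.Basis.repr_self_apply]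
  have hPrid : ∀ w : V, Pr w = w := by
    intro w
    apply PiLp.ext; intro i
    rw [hPrsum]
    simp [hdelta, Finset.sum_ite_eq]
  have hMtop : ∀ w : V, w ∈ M := fun w => hPrid w ▸ hPrM w
  -- conclude surjectivity
  intro T
  obtain ⟨a, ha⟩ := hMtop (WithLp.toLp 2 (fun i => T (e i) : ∀ _ : Fin n, σ.H) : V)
  refine ⟨a, ?_⟩
  have hcoe : ∀ i, σ.π a (e i) = T (e i) := by
    intro i
    have := congrArg (fun w : V => w i) ha
    simpa [hψ] using this
  have : ((σ.π a : σ.H →L[ℂ] σ.H) : σ.H →ₗ[ℂ] σ.H) = (T : σ.H →ₗ[ℂ] σ.H) :=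
    Module.Basis.ext e fun i => hcoe i
  exact ContinuousLinearMap.coe_injective this


open scoped InnerProductSpace in
lemma key (σ ρ : IrredRep A) [FiniteDimensional ℂ σ.H]
    (hker : ∀ a : A, σ.π a = 0 ↔ ρ.π a = 0) :
    FiniteDimensional ℂ ρ.H ∧ Module.finrank ℂ ρ.H = Module.finrank ℂ σ.H := by
  classical
  have hwd : ∀ a b : A, σ.π a = σ.π b → ρ.π a = ρ.π b := by
    intro a b h
    have h1 : σ.π (a - b) = 0 := by rw [map_sub, h, sub_self]
    have h2 := (hker _).1 h1
    rwa [map_sub, sub_eq_zero] at h2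
  haveI := nontriv σ
  obtain ⟨x₀, hx₀⟩ := exists_ne (0 : σ.H)
  set ξ₀ : σ.H := ((‖x₀‖⁻¹ : ℂ)) • x₀ with hξ₀def
  have hξ₀ : ‖ξ₀‖ = 1 := norm_smul_inv_norm hx₀
  have hξ₀ne : ξ₀ ≠ 0 := by
    intro h; rw [h, norm_zero] at hξ₀; norm_num at hξ₀
  have hinner₀ : ⟪ξ₀, ξ₀⟫_ℂ = 1 := by
    rw [inner_self_eq_norm_sq_to_K, hξ₀]; norm_num
  let r1 : σ.H → σ.H → (σ.H →L[ℂ] σ.H) := fun u v => (innerSL ℂ u).smulRight v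
  have hr1 : ∀ u v x, r1 u v x = ⟪u, x⟫_ℂ • v := fun u v x => rfl
  have hr1adj : ∀ u v, star (r1 u v) = r1 v u := by
    intro u v
    rw [ContinuousLinearMap.star_eq_adjoint]
    refine (((r1 v u).eq_adjoint_iff (r1 u v)).2 ?_).symm
    intro x y
    rw [hr1, hr1, inner_smul_left, inner_smul_right, inner_conj_symm]
    ring
  set p : σ.H →L[ℂ] σ.H := r1 ξ₀ ξ₀ with hpdef
  have hpξ₀ : p ξ₀ = ξ₀ := by rw [hpdef, hr1, hinner₀, one_smul]
  have hpp : p * p = p := by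
    ext x
    rw [ContinuousLinearMap.mul_apply,
      show p x = ⟪ξ₀, x⟫_ℂ • ξ₀ from hr1 ξ₀ ξ₀ x, map_smul, hpξ₀]
  have hpne : p ≠ 0 := by
    intro h
    rw [h] at hpξ₀
    exact hξ₀ne (by simpa using hpξ₀.symm)
  obtain ⟨b, hb⟩ := surj σ p
  set q : ρ.H →L[ℂ] ρ.H := ρ.π b with hqdef
  have hqq : q * q = q := by
    have h1 := hwd (b * b) b (by rw [map_mul, hb, hpp])
    rw [hqdef, ← map_mul, h1]
  have hqstar : star q = q := by
    have h1 := hwd (star b) b (by rw [map_star, hb, hr1adj])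
    rw [hqdef, ← map_star, h1]
  have hqne : q ≠ 0 := by
    intro h
    exact hpne (by rw [← hb]; exact (hker b).2 h)
  obtain ⟨x₁, hx₁⟩ : ∃ x, q x ≠ 0 := by
    by_contra h; push_neg at h
    exact hqne (ContinuousLinearMap.ext fun x => h x)
  set ξ : ρ.H := ((‖q x₁‖⁻¹ : ℂ)) • (q x₁) with hξdef
  have hξ1 : ‖ξ‖ = 1 := norm_smul_inv_norm hx₁
  have hinnerξ : ⟪ξ, ξ⟫_ℂ = 1 := by
    rw [inner_self_eq_norm_sq_to_K, hξ1]; norm_num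
  have hξne : ξ ≠ 0 := by
    intro h; rw [h, norm_zero] at hξ1; norm_num at hξ1
  have hqξ : q ξ = ξ := by
    rw [hξdef, map_smul]
    congr 1
    rw [← ContinuousLinearMap.mul_apply, hqq]
  have hsur := surj σ
  let w : σ.H → A := fun y => Classical.choose (hsur (r1 ξ₀ y))
  have hw : ∀ y, σ.π (w y) = r1 ξ₀ y := fun y => Classical.choose_spec (hsur (r1 ξ₀ y))
  have hr1add : ∀ y z : σ.H, r1 ξ₀ (y + z) = r1 ξ₀ y + r1 ξ₀ z := by
    intro y z; ext x
    simp [hr1, smul_add]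
  have hr1smul : ∀ (c : ℂ) (y : σ.H), r1 ξ₀ (c • y) = c • r1 ξ₀ y := by
    intro c y; ext x
    rw [hr1]
    simp [hr1, smul_smul, mul_comm]
  let L : σ.H →ₗ[ℂ] ρ.H :=
    { toFun := fun y => ρ.π (w y) ξ
      map_add' := by
        intro y z
        have h1 := hwd (w (y + z)) (w y + w z)
          (by rw [map_add, hw, hw, hw, hr1add])
        show ρ.π (w (y + z)) ξ = ρ.π (w y) ξ + ρ.π (w z) ξ
        rw [h1, map_add]; rfl
      map_smul' := by
        intro c y
        have h1 := hwd (w (c • y)) (c • w y)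
          (by rw [map_smul, hw, hw, hr1smul])
        show ρ.π (w (c • y)) ξ = c • ρ.π (w y) ξ
        have h3 : ρ.π (c • w y) = c • ρ.π (w y) := map_smul ρ.π c (w y)
        rw [h1, h3]; rfl }
  have hL : ∀ y, L y = ρ.π (w y) ξ := fun y => rfl
  have hLform : ∀ a : A, ρ.π a ξ = L (σ.π a ξ₀) := by
    intro a
    have h1 : σ.π (a * b) = r1 ξ₀ (σ.π a ξ₀) := by
      rw [map_mul, hb]
      ext x
      rw [ContinuousLinearMap.mul_apply, hpdef, hr1, hr1, map_smul]
    have h2 := hwd (w (σ.π a ξ₀)) (a * b) (by rw [hw, h1])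
    rw [hL, h2, map_mul, ContinuousLinearMap.mul_apply, ← hqdef, hqξ]
  have hLnorm : ∀ y : σ.H, ⟪L y, L y⟫_ℂ = ((‖y‖ : ℂ))^2 := by
    intro y
    have h1 : σ.π (star (w y) * w y) = σ.π (((‖y‖ : ℂ)^2) • b) := by
      rw [map_mul, map_star, hw, map_smul, hb, hr1adj]
      ext x
      rw [ContinuousLinearMap.mul_apply, hr1, hr1, ContinuousLinearMap.smul_apply,
        show p x = ⟪ξ₀, x⟫_ℂ • ξ₀ from hr1 ξ₀ ξ₀ x,
        inner_smul_right, inner_self_eq_norm_sq_to_K,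
        smul_smul ((‖y‖ : ℂ)^2) (⟪ξ₀, x⟫_ℂ) ξ₀, mul_comm]
      rfl
    have h2 := hwd _ _ h1
    calc ⟪L y, L y⟫_ℂ = ⟪ξ, ContinuousLinearMap.adjoint (ρ.π (w y)) (ρ.π (w y) ξ)⟫_ℂ := by
          rw [ContinuousLinearMap.adjoint_inner_right]; rfl
      _ = ⟪ξ, ρ.π (star (w y) * w y) ξ⟫_ℂ := by
          rw [map_mul, map_star, ContinuousLinearMap.star_eq_adjoint]; rfl
      _ = ⟪ξ, ((‖y‖ : ℂ)^2) • ξ⟫_ℂ := by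
          have h3 : ρ.π (((‖y‖ : ℂ)^2) • b) = ((‖y‖ : ℂ)^2) • ρ.π b :=
            map_smul ρ.π _ b
          rw [h2, h3, ContinuousLinearMap.smul_apply, ← hqdef, hqξ]
      _ = ((‖y‖ : ℂ))^2 := by rw [inner_smul_right, hinnerξ, mul_one]
  have hLinj : Function.Injective L := by
    rw [← LinearMap.ker_eq_bot]
    rw [LinearMap.ker_eq_bot']
    intro y hy
    have h1 := hLnorm y
    rw [hy] at h1
    simp only [inner_zero_left] at h1
    have h2 : (‖y‖ : ℂ) = 0 := by
      have := pow_eq_zero_iff (n := 2) (by norm_num) |>.1 h1.symm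
      exact this
    rw [Complex.ofReal_eq_zero, norm_eq_zero] at h2
    exact h2
  set K : Submodule ℂ ρ.H := LinearMap.range L with hKdef
  have hKinv : ∀ a : A, ∀ x ∈ K, ρ.π a x ∈ K := by
    rintro a x ⟨y, rfl⟩
    have h1 : ρ.π a (L y) = ρ.π (a * w y) ξ := by
      rw [hL, map_mul]; rfl
    rw [h1, hLform]
    exact ⟨_, rfl⟩
  haveI hKfd : FiniteDimensional ℂ ↥K := by
    rw [hKdef]; infer_instance
  have hKclosed : IsClosed (K : Set ρ.H) := Submodule.closed_of_finiteDimensional K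
  have hξK : ξ ∈ K := by
    refine ⟨σ.π b ξ₀, ?_⟩
    rw [← hLform b, ← hqdef, hqξ]
  have hKne : K ≠ ⊥ := by
    intro h
    rw [h] at hξK
    exact hξne (by simpa using hξK)
  rcases ρ.irred K hKclosed hKinv with h | h
  · exact absurd h hKne
  · let eq1 : σ.H ≃ₗ[ℂ] ↥K := LinearEquiv.ofInjective L hLinj
    haveI hfdρ : FiniteDimensional ℂ ρ.H := by
      have h2 : FiniteDimensional ℂ ↥(⊤ : Submodule ℂ ρ.H) := h ▸ hKfd
      exact Module.Finite.equiv (Submodule.topEquiv (R := ℂ) (M := ρ.H))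
    refine ⟨hfdρ, ?_⟩
    have h1 : Module.finrank ℂ ↥K = Module.finrank ℂ σ.H := (LinearEquiv.finrank_eq eq1).symm
    have h2 : Module.finrank ℂ ↥(⊤ : Submodule ℂ ρ.H) = Module.finrank ℂ ρ.H :=
      finrank_top ℂ ρ.H
    rw [← h1, ← h2, h]


end HomogAux

/-- Let `Y ⊆ Prim_k A` be closed in `Prim A` and let `J_Y = ⋂_{P ∈ Y} P` be the
corresponding ideal. Then the quotient `A_Y = A / J_Y` is `k`-homogeneous: every
irreducible representation of `A_Y` — equivalently, every irreducible representation
of `A` annihilating `J_Y` — is `k`-dimensional. -/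
theorem quotient_of_primk_closed_is_homogeneous (k : ℕ) (Y : Set (Set A))
    (hYk : ∀ P ∈ Y, IsPrimkIdeal A k P) (hYclosed : IsJacobsonClosed A Y)
    (ρ : IrredRep A) (hann : {a : A | ∀ P ∈ Y, a ∈ P} ⊆ {a | ρ.π a = 0}) :
    FiniteDimensional ℂ ρ.H ∧ Module.finrank ℂ ρ.H = k := by
  have hP : IsPrimIdeal A {a | ρ.π a = 0} := ⟨ρ, rfl⟩
  have hsub : (⋂₀ Y) ⊆ {a | ρ.π a = 0} := by
    intro a ha
    exact hann (fun P hPY => Set.mem_sInter.1 ha P hPY)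
  have hmem := hYclosed.2 _ hP hsub
  obtain ⟨σ, hfd, hrk, hkerEq⟩ := hYk _ hmem
  haveI := hfd
  have hker : ∀ a : A, σ.π a = 0 ↔ ρ.π a = 0 := by
    intro a
    exact (Set.ext_iff.1 hkerEq a).symm
  obtain ⟨h1, h2⟩ := HomogAux.key σ ρ hker
  exact ⟨h1, h2.trans hrk⟩
end
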